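/- arXiv:1309.1135 — 4 statements merged into one kernel-verified Lean document; each statement's English description precedes it below -/
import Mathlib

section
/- Let n ≥ 3, γ > 0 and a ∈ ℝⁿ. Define the bubble U(y) = (γ/(γ² + |y − a|²))^{(n−2)/2} on ℝⁿ and set λ* = √(γ² + |a|²). For λ > 0 let U^λ denote the Kelvin inversion of U, U^λ(y) = (λ/|y|)^{n−2}·U(λ²y/|y|²). Then for every y ∈ ℝⁿ with |y| > λ: if 0 < λ < λ* then U(y) − U^λ(y) > 0, and if λ > λ* then U(y) − U^λ(y) < 0. -/
/-!
Writing `A(y) = γ² + |y - a|²` for the denominator of the bubble `U = (γ / A)^{(n-2)/2}`, the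
Kelvin inversion is again of this form, `U^λ(y) = (γ / A_λ(y))^{(n-2)/2}`, with
`A_λ(y) = (|y|/λ)² (γ² + |y^λ - a|²)`. Expanding `|y^λ - a|²` gives the exact identity
`A_λ(y) - A(y) = (|y|² - λ²)(λ*² - λ²)/λ²`, so for `|y| > λ` the sign of `A_λ - A` is the sign of
`λ* - λ`, and `t ↦ (γ/t)^{(n-2)/2}` is strictly decreasing.
-/

open Metric Set

noncomputable section

abbrev Euc (n : ℕ) := EuclideanSpace ℝ (Fin n)

/-- The inverted point `y^λ = λ²y/|y|²`. -/
def invPt {n : ℕ} (lam : ℝ) (y : Euc n) : Euc n := (lam ^ 2 / ‖y‖ ^ 2) • y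

/-- The Kelvin inversion `f^λ(y) = (λ/|y|)^{n-2} f(y^λ)`. -/
def kelvin (n : ℕ) (lam : ℝ) (f : Euc n → ℝ) (y : Euc n) : ℝ :=
  (lam / ‖y‖) ^ ((n : ℝ) - 2) * f (invPt lam y)

def bubble (n : ℕ) (γ : ℝ) (a : Euc n) (y : Euc n) : ℝ :=
  (γ / (γ ^ 2 + ‖y - a‖ ^ 2)) ^ (((n : ℝ) - 2) / 2)

theorem strictAntiOn_div_rpow {γ p : ℝ} (hγ : 0 < γ) (hp : 0 < p) :
    StrictAntiOn (fun t : ℝ => (γ / t) ^ p) (Ioi 0) := fun _ hs _ _ hst =>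
  Real.rpow_lt_rpow (div_pos hγ (hs.trans hst)).le (div_lt_div_of_pos_left hγ hs hst) hp

theorem sq_norm_mul_sq_norm_invPt_sub {n : ℕ} (lam : ℝ) {y : Euc n} (hy : y ≠ 0) (a : Euc n) :
    ‖y‖ ^ 2 * ‖invPt lam y - a‖ ^ 2
      = lam ^ 4 - 2 * lam ^ 2 * inner ℝ y a + ‖a‖ ^ 2 * ‖y‖ ^ 2 := by
  have hy' : ‖y‖ ≠ 0 := norm_ne_zero_iff.mpr hy
  rw [norm_sub_sq_real, invPt, norm_smul, real_inner_smul_left,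
    Real.norm_of_nonneg (by positivity)]
  field_simp

theorem norm_div_sq_mul_denom_invPt_sub_denom {n : ℕ} {lam : ℝ} (hlam : lam ≠ 0) (γ : ℝ)
    (a : Euc n) {y : Euc n} (hy : y ≠ 0) :
    (‖y‖ / lam) ^ 2 * (γ ^ 2 + ‖invPt lam y - a‖ ^ 2) - (γ ^ 2 + ‖y - a‖ ^ 2)
      = (‖y‖ ^ 2 - lam ^ 2) * (γ ^ 2 + ‖a‖ ^ 2 - lam ^ 2) / lam ^ 2 := by
  rw [norm_sub_sq_real y a]
  field_simp
  linear_combination sq_norm_mul_sq_norm_invPt_sub lam hy a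

theorem kelvin_bubble {n : ℕ} {γ lam : ℝ} (hγ : 0 ≤ γ) (hlam : 0 < lam) (a : Euc n)
    {y : Euc n} (hy : y ≠ 0) :
    kelvin n lam (bubble n γ a) y
      = (γ / ((‖y‖ / lam) ^ 2 * (γ ^ 2 + ‖invPt lam y - a‖ ^ 2))) ^ (((n : ℝ) - 2) / 2) := by
  have hy' : ‖y‖ ≠ 0 := norm_ne_zero_iff.mpr hy
  rw [kelvin, bubble]
  set p := ((n : ℝ) - 2) / 2
  rw [show (n : ℝ) - 2 = 2 * p by ring, Real.rpow_mul (by positivity), Real.rpow_two,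
    ← Real.mul_rpow (by positivity) (by positivity)]
  field_simp

/-- dichotomy for the Kelvin inversion of a bubble across the
critical radius `λ* = √(γ² + |a|²)`. -/
theorem bubble_kelvin_dichotomy (n : ℕ) (hn : 3 ≤ n) (γ : ℝ) (hγ : 0 < γ) (a : Euc n)
    (U : Euc n → ℝ)
    (hU : ∀ y : Euc n, U y = (γ / (γ ^ 2 + ‖y - a‖ ^ 2)) ^ (((n : ℝ) - 2) / 2))
    (lamStar : ℝ) (hls : lamStar = Real.sqrt (γ ^ 2 + ‖a‖ ^ 2)) :
    ∀ lam : ℝ, 0 < lam → ∀ y : Euc n, lam < ‖y‖ →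
      (lam < lamStar → 0 < U y - kelvin n lam U y) ∧
      (lamStar < lam → U y - kelvin n lam U y < 0) := by
  intro lam hlam y hy
  obtain rfl : U = bubble n γ a := funext hU
  have hy0 : y ≠ 0 := norm_pos_iff.mp (hlam.trans hy)
  have hp : 0 < ((n : ℝ) - 2) / 2 := by
    have : (3 : ℝ) ≤ n := by exact_mod_cast hn
    linarith
  have hA : 0 < γ ^ 2 + ‖y - a‖ ^ 2 := by positivity
  have hA' : 0 < (‖y‖ / lam) ^ 2 * (γ ^ 2 + ‖invPt lam y - a‖ ^ 2) := by
    have : ‖y‖ ≠ 0 := norm_ne_zero_iff.mpr hy0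
    positivity
  have hdenom_sub := norm_div_sq_mul_denom_invPt_sub_denom hlam.ne' γ a hy0
  have hy2 : lam ^ 2 < ‖y‖ ^ 2 := pow_lt_pow_left₀ hy hlam.le two_ne_zero
  have hls2 : lamStar ^ 2 = γ ^ 2 + ‖a‖ ^ 2 := by rw [hls, Real.sq_sqrt (by positivity)]
  rw [← hls2] at hdenom_sub
  have hmono := strictAntiOn_div_rpow hγ hp
  rw [kelvin_bubble hγ.le hlam a hy0, sub_pos, sub_neg]
  constructor
  · intro hlt
    have hlt2 := pow_lt_pow_left₀ hlt hlam.le two_ne_zero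
    have : 0 < (‖y‖ ^ 2 - lam ^ 2) * (lamStar ^ 2 - lam ^ 2) / lam ^ 2 :=
      div_pos (mul_pos (by linarith) (by linarith)) (by positivity)
    exact hmono hA hA' (by linarith)
  · intro hlt
    have hlt2 := pow_lt_pow_left₀ hlt (hls ▸ Real.sqrt_nonneg _) two_ne_zero
    have : (‖y‖ ^ 2 - lam ^ 2) * (lamStar ^ 2 - lam ^ 2) / lam ^ 2 < 0 :=
      div_neg_of_neg_of_pos (mul_neg_of_pos_of_neg (by linarith) (by linarith)) (by positivity)
    exact hmono hA' hA (by linarith)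
end
end

section
/- Let n ≥ 1 and let g : (0,∞) → ℝ be twice continuously differentiable. Define h : ℝⁿ ∖ {0} → ℝ by h(y) = yₙ·|y|^{−n}·g(|y|), where yₙ is the last coordinate of y. Then for every y ≠ 0: (i) Δh(y) = yₙ·|y|^{−n}·( g''(|y|) − ((n−1)/|y|)·g'(|y|) ); (ii) if yₙ = 0, then (∂h/∂yₙ)(y) = |y|^{−n}·g(|y|). -/
/-!
Write `h(y) = ⟪eₙ, y⟫ ψ(|y|)` with `ψ(t) = t^{-n} g(t)`. For a linear function times a radial one,
`Δ(⟪a, y⟫ ψ(|y|)) = ⟪a, y⟫ (ψ'' + (n + 1) ψ' / |y|)`: the radial Laplacian `ψ'' + (n - 1) ψ' / |y|`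
plus twice the cross term `∇⟪a, y⟫ · ∇ψ(|y|) = ⟪a, y⟫ ψ' / |y|`. For `ψ = t^{-n} g` the terms
without `g''` or `g'` cancel, leaving `|y|^{-n} (g'' - (n - 1) g' / |y|)`. On `yₙ = 0` the radial
part of `∂ₙh` carries the factor `yₙ`, so only `ψ(|y|) ∂ₙyₙ` survives.
-/

open Set

noncomputable section

/-- Index of the last coordinate. -/
def lastIdx (n : ℕ) (h0 : 0 < n) : Fin n := ⟨n - 1, by omega⟩

/-- Laplacian as the sum of pure second partial derivatives. -/
def lap (n : ℕ) (u : Euc n → ℝ) (x : Euc n) : ℝ :=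
  ∑ i : Fin n, iteratedFDeriv ℝ 2 u x
    ![EuclideanSpace.single i (1 : ℝ), EuclideanSpace.single i (1 : ℝ)]

open Filter Topology InnerProductSpace
open scoped RealInnerProductSpace Laplacian

theorem iteratedFDeriv_two_apply_self {𝕜 E F : Type*} [NontriviallyNormedField 𝕜]
    [NormedAddCommGroup E] [NormedSpace 𝕜 E] [NormedAddCommGroup F] [NormedSpace 𝕜 F]
    {f : E → F} {y : E} (hf : DifferentiableAt 𝕜 (fderiv 𝕜 f) y) (v : E) :
    iteratedFDeriv 𝕜 2 f y ![v, v] = fderiv 𝕜 (fun x => fderiv 𝕜 f x v) y v := by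
  rw [iteratedFDeriv_two_apply, fderiv_clm_apply hf (differentiableAt_const v)]
  simp only [Matrix.cons_val_zero, Matrix.cons_val_one, fderiv_fun_const, Pi.zero_apply,
    ContinuousLinearMap.comp_zero, zero_add, ContinuousLinearMap.flip_apply]

section RadialCalculus

variable {E : Type*} [NormedAddCommGroup E] [InnerProductSpace ℝ E]

theorem hasFDerivAt_norm_of_ne_zero {z : E} (hz : z ≠ 0) :
    HasFDerivAt (fun x : E => ‖x‖) (‖z‖⁻¹ • innerSL ℝ z) z := by
  have hsq : HasFDerivAt (fun x : E => √(‖x‖ ^ 2)) ((1 / (2 * √(‖z‖ ^ 2))) • 2 • innerSL ℝ z) z :=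
    (Real.hasDerivAt_sqrt (by positivity)).comp_hasFDerivAt z
      (hasStrictFDerivAt_norm_sq z).hasFDerivAt
  simp only [Real.sqrt_sq (norm_nonneg _)] at hsq
  convert hsq using 1
  rw [← Nat.cast_smul_eq_nsmul ℝ, smul_smul, Nat.cast_ofNat]
  congr 1
  field_simp

theorem HasDerivAt.hasFDerivAt_comp_norm {φ : ℝ → ℝ} {φ' : ℝ} {z : E} (hz : z ≠ 0)
    (hφ : HasDerivAt φ φ' ‖z‖) :
    HasFDerivAt (fun x : E => φ ‖x‖) ((φ' / ‖z‖) • innerSL ℝ z) z := by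
  refine (hφ.comp_hasFDerivAt z (hasFDerivAt_norm_of_ne_zero hz)).congr_fderiv ?_
  rw [smul_smul, div_eq_mul_inv]

variable {a : E} {ψ ψ' : ℝ → ℝ}

theorem hasFDerivAt_inner_mul_radial {z : E} (hz : z ≠ 0) (hψ : HasDerivAt ψ (ψ' ‖z‖) ‖z‖) :
    HasFDerivAt (fun x : E => ⟪a, x⟫ * ψ ‖x‖)
      (ψ ‖z‖ • innerSL ℝ a + (⟪a, z⟫ * (ψ' ‖z‖ / ‖z‖)) • innerSL ℝ z) z := by
  refine ((innerSL ℝ a).hasFDerivAt.mul (hψ.hasFDerivAt_comp_norm hz)).congr_fderiv ?_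
  ext v
  simp only [add_apply, smul_apply, innerSL_apply_apply, smul_eq_mul]
  ring

theorem fderiv_inner_mul_radial_eventuallyEq {y : E} (hy : y ≠ 0)
    (hψ : ∀ t, 0 < t → HasDerivAt ψ (ψ' t) t) :
    fderiv ℝ (fun x : E => ⟪a, x⟫ * ψ ‖x‖) =ᶠ[𝓝 y]
      fun x => ψ ‖x‖ • innerSL ℝ a + (⟪a, x⟫ * (ψ' ‖x‖ / ‖x‖)) • innerSL ℝ x :=
  eventually_of_mem (isOpen_ne.mem_nhds hy) fun x (hx : x ≠ 0) =>
    (hasFDerivAt_inner_mul_radial hx (hψ _ (norm_pos_iff.mpr hx))).fderiv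

theorem iteratedFDeriv_two_inner_mul_radial {ψ'' : ℝ} {y : E} (hy : y ≠ 0)
    (hψ : ∀ t, 0 < t → HasDerivAt ψ (ψ' t) t) (hψ' : HasDerivAt ψ' ψ'' ‖y‖) (v : E) :
    iteratedFDeriv ℝ 2 (fun x : E => ⟪a, x⟫ * ψ ‖x‖) y ![v, v]
      = ψ' ‖y‖ / ‖y‖ * (2 * ⟪a, v⟫ * ⟪y, v⟫ + ⟪a, y⟫ * ‖v‖ ^ 2)
        + ⟪a, y⟫ * ⟪y, v⟫ ^ 2 * (ψ'' - ψ' ‖y‖ / ‖y‖) / ‖y‖ ^ 2 := by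
  have hr : 0 < ‖y‖ := norm_pos_iff.mpr hy
  have hf := fderiv_inner_mul_radial_eventuallyEq (a := a) hy hψ
  have hΦ : HasDerivAt (fun t => ψ' t / t) ((ψ'' * ‖y‖ - ψ' ‖y‖ * 1) / ‖y‖ ^ 2) ‖y‖ :=
    hψ'.div (hasDerivAt_id _) hr.ne'
  have hD : DifferentiableAt ℝ (fderiv ℝ fun x : E => ⟪a, x⟫ * ψ ‖x‖) y :=
    hf.differentiableAt_iff.mpr <|
      (((hψ _ hr).hasFDerivAt_comp_norm hy).differentiableAt.smul_const _).add
        (((innerSL ℝ a).differentiableAt.mul (hΦ.hasFDerivAt_comp_norm hy).differentiableAt).smul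
          (innerSL ℝ).differentiableAt)
  have hfv : (fun x => fderiv ℝ (fun x : E => ⟪a, x⟫ * ψ ‖x‖) x v) =ᶠ[𝓝 y]
      fun x => ψ ‖x‖ * ⟪a, v⟫ + ⟪a, x⟫ * ⟪v, x⟫ * (ψ' ‖x‖ / ‖x‖) := by
    filter_upwards [hf] with x hx
    simp only [hx, add_apply, smul_apply, innerSL_apply_apply, smul_eq_mul, real_inner_comm v x]
    ring
  have hfv' : HasFDerivAt (fun x => ψ ‖x‖ * ⟪a, v⟫ + ⟪a, x⟫ * ⟪v, x⟫ * (ψ' ‖x‖ / ‖x‖)) _ y :=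
    (((hψ _ hr).hasFDerivAt_comp_norm hy).mul_const ⟪a, v⟫).add
      (((innerSL ℝ a).hasFDerivAt.mul (innerSL ℝ v).hasFDerivAt).mul (hΦ.hasFDerivAt_comp_norm hy))
  rw [iteratedFDeriv_two_apply_self hD, hfv.fderiv_eq, hfv'.fderiv]
  simp only [coe_innerSL_apply, Pi.mul_apply, smul_add, add_apply, smul_apply, smul_eq_mul,
    real_inner_self_eq_norm_sq]
  field_simp
  rw [real_inner_comm v y]
  ring

theorem laplacian_inner_mul_radial [FiniteDimensional ℝ E] {ψ'' : ℝ} {y : E} (hy : y ≠ 0)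
    (hψ : ∀ t, 0 < t → HasDerivAt ψ (ψ' t) t) (hψ' : HasDerivAt ψ' ψ'' ‖y‖) :
    Δ (fun x : E => ⟪a, x⟫ * ψ ‖x‖) y
      = ⟪a, y⟫ * (ψ'' + (Module.finrank ℝ E + 1) / ‖y‖ * ψ' ‖y‖) := by
  set b := stdOrthonormalBasis ℝ E
  have hay : ∑ i, ⟪a, b i⟫ * ⟪y, b i⟫ = ⟪a, y⟫ := by
    simpa only [real_inner_comm y] using b.sum_inner_mul_inner a y
  have hyy : ∑ i, ⟪y, b i⟫ ^ 2 = ‖y‖ ^ 2 := by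
    simpa only [Real.norm_eq_abs, sq_abs] using b.sum_sq_norm_inner_left y
  have hbb : ∑ i, ‖b i‖ ^ 2 = Module.finrank ℝ E := by simp [b.norm_eq_one]
  rw [laplacian_eq_iteratedFDeriv_orthonormalBasis _ b]
  set r := ‖y‖
  have hterm : ∀ i, iteratedFDeriv ℝ 2 (fun x : E => ⟪a, x⟫ * ψ ‖x‖) y ![b i, b i]
      = 2 * (ψ' r / r) * (⟪a, b i⟫ * ⟪y, b i⟫) + ⟪a, y⟫ * (ψ' r / r) * ‖b i‖ ^ 2
        + ⟪a, y⟫ * (ψ'' - ψ' r / r) / r ^ 2 * ⟪y, b i⟫ ^ 2 := fun i => by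
    rw [iteratedFDeriv_two_inner_mul_radial hy hψ hψ']
    ring
  simp only [hterm, Finset.sum_add_distrib, ← Finset.mul_sum, hay, hyy, hbb]
  have hr : r ≠ 0 := norm_ne_zero_iff.mpr hy
  field_simp
  ring

end RadialCalculus

theorem lap_eq_laplacian (n : ℕ) (u : Euc n → ℝ) : lap n u = Δ u := by
  rw [laplacian_eq_iteratedFDeriv_orthonormalBasis u (EuclideanSpace.basisFun (Fin n) ℝ)]
  ext x
  simp only [lap, EuclideanSpace.basisFun_apply]

theorem HasDerivAt.rpow_neg_mul {g : ℝ → ℝ} {g' N t : ℝ} (ht : 0 < t) (hg : HasDerivAt g g' t) :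
    HasDerivAt (fun s => s ^ (-N) * g s) (t ^ (-N) * (g' - N / t * g t)) t := by
  refine ((Real.hasDerivAt_rpow_const (p := -N) (Or.inl ht.ne')).mul hg).congr_deriv ?_
  rw [Real.rpow_sub_one ht.ne']
  ring

theorem HasDerivAt.rpow_neg_mul_sub_div_mul {g g₁ : ℝ → ℝ} {g₂ N t : ℝ} (ht : 0 < t)
    (hg : HasDerivAt g (g₁ t) t) (hg₁ : HasDerivAt g₁ g₂ t) :
    HasDerivAt (fun s => s ^ (-N) * (g₁ s - N / s * g s))
      (t ^ (-N) * (g₂ - 2 * N / t * g₁ t + N * (N + 1) / t ^ 2 * g t)) t := by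
  refine ((hg₁.sub (((hasDerivAt_const t N).div (hasDerivAt_id t) ht.ne').mul hg)).rpow_neg_mul
    ht).congr_deriv ?_
  simp only [Pi.sub_apply, Pi.mul_apply, Pi.div_apply, id]
  field_simp
  ring

theorem laplacian_of_boundary_test_function_general (n : ℕ) (h0 : 0 < n)
    (g : ℝ → ℝ) (hg : ContDiffOn ℝ 2 g (Set.Ioi (0 : ℝ)))
    (h : Euc n → ℝ)
    (hh : ∀ y : Euc n, h y = y (lastIdx n h0) * ‖y‖ ^ (-(n : ℝ)) * g ‖y‖) :
    ∀ y : Euc n, y ≠ 0 →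
      lap n h y = y (lastIdx n h0) * ‖y‖ ^ (-(n : ℝ))
          * (deriv (deriv g) ‖y‖ - ((n : ℝ) - 1) / ‖y‖ * deriv g ‖y‖) ∧
      (y (lastIdx n h0) = 0 →
        fderiv ℝ h y (EuclideanSpace.single (lastIdx n h0) (1 : ℝ))
          = ‖y‖ ^ (-(n : ℝ)) * g ‖y‖) := by
  intro y hy
  set e := EuclideanSpace.single (lastIdx n h0) (1 : ℝ)
  have hr : 0 < ‖y‖ := norm_pos_iff.mpr hy
  have hg₁ : ∀ t, 0 < t → HasDerivAt g (deriv g t) t := fun t ht =>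
    ((hg.contDiffAt (isOpen_Ioi.mem_nhds ht)).differentiableAt two_ne_zero).hasDerivAt
  have hg₂ : HasDerivAt (deriv g) (deriv (deriv g) ‖y‖) ‖y‖ :=
    (((hg.deriv_of_isOpen isOpen_Ioi (by norm_num)).contDiffAt
      (isOpen_Ioi.mem_nhds hr)).differentiableAt one_ne_zero).hasDerivAt
  set ψ : ℝ → ℝ := fun s => s ^ (-(n : ℝ)) * g s
  set ψ' : ℝ → ℝ := fun s => s ^ (-(n : ℝ)) * (deriv g s - n / s * g s)
  have hψ : ∀ t, 0 < t → HasDerivAt ψ (ψ' t) t := fun t ht => (hg₁ t ht).rpow_neg_mul ht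
  have hψ' := (hg₁ _ hr).rpow_neg_mul_sub_div_mul (N := n) hr hg₂
  have hh' : h = fun x => ⟪e, x⟫ * ψ ‖x‖ := by
    funext x
    rw [hh, EuclideanSpace.inner_single_left, map_one, one_mul, mul_assoc]
  refine ⟨?_, fun hyL => ?_⟩
  · rw [lap_eq_laplacian, hh', laplacian_inner_mul_radial hy hψ hψ', finrank_euclideanSpace_fin,
      EuclideanSpace.inner_single_left, map_one, one_mul]
    simp only [ψ']
    field_simp
    ring
  · rw [hh', (hasFDerivAt_inner_mul_radial hy (hψ _ hr)).fderiv]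
    simp only [add_apply, smul_apply, innerSL_apply_apply, smul_eq_mul, e,
      EuclideanSpace.inner_single_left, hyL, map_one, one_mul, PiLp.single_apply,
      if_true, mul_one, zero_mul, add_zero]
    rfl

/-- Laplacian and boundary normal derivative of
`h(y) = yₙ |y|^{-n} g(|y|)`. -/
theorem laplacian_of_boundary_test_function (n : ℕ) (hn : 1 ≤ n) (h0 : 0 < n)
    (g : ℝ → ℝ) (hg : ContDiffOn ℝ 2 g (Set.Ioi (0 : ℝ)))
    (h : Euc n → ℝ)
    (hh : ∀ y : Euc n, h y = y (lastIdx n h0) * ‖y‖ ^ (-(n : ℝ)) * g ‖y‖) :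
    ∀ y : Euc n, y ≠ 0 →
      lap n h y = y (lastIdx n h0) * ‖y‖ ^ (-(n : ℝ))
          * (deriv (deriv g) ‖y‖ - ((n : ℝ) - 1) / ‖y‖ * deriv g ‖y‖) ∧
      (y (lastIdx n h0) = 0 →
        fderiv ℝ h y (EuclideanSpace.single (lastIdx n h0) (1 : ℝ))
          = ‖y‖ ^ (-(n : ℝ)) * g ‖y‖) :=
  laplacian_of_boundary_test_function_general n h0 g hg h hh
end
end

section
/- Let n ≥ 4 and C₀, Λ, A > 0. There exists a constant C > 0 depending only on n, C₀, Λ and A with the following property. Let Γ ≥ 1, ρ > 0, x ∈ ℝⁿ, and let K ∈ C^{n−2}(cl(B(x,ρ))) satisfy ‖∇ʲK(x)‖ ≤ C₀·‖∇K(x)‖^{(n−2−j)/(n−3)} for j = 1,…,n−2, sup over B(x,ρ) of ‖∇^{n−2}K‖ ≤ Λ, and ‖∇K(x)‖ ≤ A·Γ^{3−n}. Then for all z, w ∈ ℝⁿ with |z| ≤ ρΓ and |w| ≤ ρΓ, |K(x + Γ^{−1}z) − K(x + Γ^{−1}w)| ≤ C·Γ^{2−n}·(1 + max(|z|,|w|))^{n−2}.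 -/
/-!
Flatness and the fast vanishing of `∇K(x)` make the `j`-th derivative of `K` at `x` of size
`Γ^{j+2-n}`, the scaling of a homogeneous polynomial of degree `n - 2`, while `∇^{n-2}K` is
bounded by `Λ`. Integrating down from the top order with the mean value inequality on the ball of
radius `δ = Γ⁻¹ (1 + max |z| |w|)` around `x`, one order at a time, gives
`‖∇^{n-2-k}K‖ = O(δ^k)` on that ball, and at `k = n - 2` this is
`|K - K(x)| = O(δ^{n-2}) = O(Γ^{2-n} (1 + max |z| |w|)^{n-2})`.
-/

open Metric Set

noncomputable section

theorem rpow_natCast_sub_natCast_of_le {Γ : ℝ} (hΓ : 0 < Γ) {a b : ℕ} (hab : a ≤ b) :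
    Γ ^ ((a : ℝ) - b) = Γ⁻¹ ^ (b - a) := by
  rw [show (a : ℝ) - b = -((b - a : ℕ) : ℝ) by push_cast [Nat.cast_sub hab]; ring,
    Real.rpow_neg hΓ.le, Real.rpow_natCast, inv_pow]

theorem rpow_neg_rpow_div_eq_inv_pow {Γ N : ℝ} (hΓ : 0 < Γ) (hN : N ≠ 0) (k : ℕ) :
    (Γ ^ (-N)) ^ ((k : ℝ) / N) = Γ⁻¹ ^ k := by
  rw [← Real.rpow_mul hΓ.le, neg_mul, mul_div_cancel₀ _ hN, Real.rpow_neg hΓ.le,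
    Real.rpow_natCast, inv_pow]

theorem mul_rpow_le_of_le_mul_rpow_neg {C₀ d A Γ N : ℝ} {k : ℕ} (hC₀ : 0 ≤ C₀) (hd : 0 ≤ d)
    (hΓ : 0 < Γ) (hN : 0 < N) (hkN : k ≤ N) (hdA : d ≤ A * Γ ^ (-N)) :
    C₀ * d ^ ((k : ℝ) / N) ≤ C₀ * max A 1 * Γ⁻¹ ^ k := by
  have he0 : 0 ≤ (k : ℝ) / N := by positivity
  have hA : 0 ≤ A := nonneg_of_mul_nonneg_left (hd.trans hdA) (by positivity)
  have hAe : A ^ ((k : ℝ) / N) ≤ max A 1 := by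
    calc A ^ ((k : ℝ) / N) ≤ max A 1 ^ ((k : ℝ) / N) := by gcongr; exact le_max_left _ _
      _ ≤ max A 1 ^ (1 : ℝ) :=
        Real.rpow_le_rpow_of_exponent_le (le_max_right _ _) ((div_le_one hN).2 hkN)
      _ = max A 1 := Real.rpow_one _
  calc C₀ * d ^ ((k : ℝ) / N) ≤ C₀ * (A * Γ ^ (-N)) ^ ((k : ℝ) / N) := by gcongr
    _ = C₀ * A ^ ((k : ℝ) / N) * Γ⁻¹ ^ k := by
      rw [Real.mul_rpow hA (by positivity), rpow_neg_rpow_div_eq_inv_pow hΓ hN.ne', mul_assoc]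
    _ ≤ C₀ * max A 1 * Γ⁻¹ ^ k := by gcongr

theorem le_mul_inv_pow_of_flat {n j : ℕ} {a d C₀ A Γ : ℝ} (hj : 0 < j) (hjn : j < n - 2)
    (hC₀ : 0 ≤ C₀) (hΓ : 0 < Γ) (hd : 0 ≤ d)
    (hflat : a ≤ C₀ * d ^ (((n : ℝ) - 2 - j) / ((n : ℝ) - 3)))
    (hgrad : d ≤ A * Γ ^ ((3 : ℝ) - n)) :
    a ≤ C₀ * max A 1 * Γ⁻¹ ^ (n - 2 - j) := by
  have hk : ((n - 2 - j : ℕ) : ℝ) = n - 2 - j := by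
    rw [Nat.cast_sub hjn.le, Nat.cast_sub (by omega : 2 ≤ n)]; push_cast; ring
  have hj1 : (1 : ℝ) ≤ j := by exact_mod_cast hj
  have hN : (0 : ℝ) < n - 3 := by
    have : ((j + 3 : ℕ) : ℝ) ≤ n := by exact_mod_cast (by omega : j + 3 ≤ n)
    push_cast at this; linarith
  rw [← hk] at hflat
  rw [← neg_sub] at hgrad
  exact hflat.trans (mul_rpow_le_of_le_mul_rpow_neg hC₀ hd hΓ hN (by rw [hk]; linarith) hgrad)

theorem norm_le_of_forall_mem_of_continuousOn_closure {E F : Type*} [TopologicalSpace E]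
    [NormedAddCommGroup F] {g : E → F} {U : Set E} {c : ℝ} (hg : ContinuousOn g (closure U))
    (h : ∀ z ∈ U, ‖g z‖ ≤ c) : ∀ z ∈ closure U, ‖g z‖ ≤ c := by
  have hclosed : IsClosed (closure U ∩ g ⁻¹' closedBall 0 c) :=
    hg.preimage_isClosed_of_isClosed isClosed_closure isClosed_closedBall
  have hU : U ⊆ closure U ∩ g ⁻¹' closedBall 0 c :=
    fun y hy ↦ ⟨subset_closure hy, by simpa using h y hy⟩
  intro z hz
  simpa using (closure_minimal hU hclosed hz).2

section

variable {E F : Type*} [NormedAddCommGroup E] [NormedAddCommGroup F]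

theorem iteratedFDerivWithin_sub_const_of_ne {𝕜 : Type*} [NontriviallyNormedField 𝕜]
    [NormedSpace 𝕜 E] [NormedSpace 𝕜 F] {f : E → F} {s : Set E} {x : E} {i : ℕ}
    (hi : i ≠ 0) (c : F) (hf : ContDiffWithinAt 𝕜 i f s x) (hs : UniqueDiffOn 𝕜 s) (hx : x ∈ s) :
    iteratedFDerivWithin 𝕜 i (fun y ↦ f y - c) s x = iteratedFDerivWithin 𝕜 i f s x := by
  rw [fun_iteratedFDerivWithin_sub_apply hf contDiffWithinAt_const hs hx,
    iteratedFDerivWithin_const_of_ne hi, Pi.zero_apply, sub_zero]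

variable [NormedSpace ℝ E] [NormedSpace ℝ F] {f : E → F} {s B : Set E} {x : E} {m : ℕ} {c δ : ℝ}

theorem norm_iteratedFDerivWithin_le_of_bound_top_of_bound_at
    (hf : ContDiffOn ℝ m f s) (hs : UniqueDiffOn ℝ s) (hB : Convex ℝ B) (hBs : B ⊆ s)
    (hx : x ∈ B) (hδ : ∀ ξ ∈ B, ‖ξ - x‖ ≤ δ)
    (htop : ∀ ξ ∈ B, ‖iteratedFDerivWithin ℝ m f s ξ‖ ≤ c)
    (hlow : ∀ j < m, ‖iteratedFDerivWithin ℝ j f s x‖ ≤ c * δ ^ (m - j)) :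
    ∀ k ≤ m, ∀ ξ ∈ B, ‖iteratedFDerivWithin ℝ (m - k) f s ξ‖ ≤ (k + 1) * c * δ ^ k := by
  intro k
  induction k with
  | zero => simpa using htop
  | succ k ih =>
    intro hk ξ hξ
    set g := iteratedFDerivWithin ℝ (m - (k + 1)) f s
    have hg : DifferentiableOn ℝ g s :=
      hf.differentiableOn_iteratedFDerivWithin (by exact_mod_cast (by omega : m - (k + 1) < m)) hs
    have hg' : ∀ y ∈ B, ‖fderivWithin ℝ g s y‖ ≤ (k + 1) * c * δ ^ k := fun y hy ↦ by
      rw [norm_fderivWithin_iteratedFDerivWithin, (by omega : m - (k + 1) + 1 = m - k)]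
      exact ih (by omega) y hy
    have hmv : ‖g ξ - g x‖ ≤ (k + 1) * c * δ ^ k * ‖ξ - x‖ :=
      hB.norm_image_sub_le_of_norm_hasFDerivWithin_le
        (fun y hy ↦ ((hg y (hBs hy)).hasFDerivWithinAt).mono hBs) hg' hx hξ
    have hgx : ‖g x‖ ≤ c * δ ^ (k + 1) := by
      simpa [(by omega : m - (m - (k + 1)) = k + 1)] using hlow (m - (k + 1)) (by omega)
    have hδ0 : 0 ≤ δ := (norm_nonneg _).trans (hδ x hx)
    have hc0 : 0 ≤ c := (norm_nonneg _).trans (htop x hx)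
    calc ‖g ξ‖ ≤ ‖g x‖ + ‖g ξ - g x‖ := norm_le_insert' _ _
      _ ≤ c * δ ^ (k + 1) + (k + 1) * c * δ ^ k * δ := by
        gcongr
        exact hmv.trans (by gcongr; exact hδ ξ hξ)
      _ = (↑(k + 1) + 1) * c * δ ^ (k + 1) := by push_cast; ring

theorem norm_sub_le_of_bound_top_of_bound_at
    (hf : ContDiffOn ℝ m f s) (hm : m ≠ 0) (hs : UniqueDiffOn ℝ s) (hB : Convex ℝ B)
    (hBs : B ⊆ s) (hx : x ∈ B) (hδ : ∀ ξ ∈ B, ‖ξ - x‖ ≤ δ)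
    (htop : ∀ ξ ∈ B, ‖iteratedFDerivWithin ℝ m f s ξ‖ ≤ c)
    (hlow : ∀ j, 0 < j → j < m → ‖iteratedFDerivWithin ℝ j f s x‖ ≤ c * δ ^ (m - j)) :
    ∀ ξ ∈ B, ‖f ξ - f x‖ ≤ (m + 1) * c * δ ^ m := by
  have hderiv {j : ℕ} (hj : j ≠ 0) (hjm : j ≤ m) {ξ : E} (hξ : ξ ∈ B) :
      iteratedFDerivWithin ℝ j (fun y ↦ f y - f x) s ξ = iteratedFDerivWithin ℝ j f s ξ :=
    iteratedFDerivWithin_sub_const_of_ne hj _ ((hf ξ (hBs hξ)).of_le (by exact_mod_cast hjm))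
      hs (hBs hξ)
  have hlow' : ∀ j < m, ‖iteratedFDerivWithin ℝ j (fun y ↦ f y - f x) s x‖ ≤ c * δ ^ (m - j) := by
    intro j hjm
    rcases Nat.eq_zero_or_pos j with rfl | hj
    · have hc0 : 0 ≤ c := (norm_nonneg _).trans (htop x hx)
      have hδ0 : 0 ≤ δ := (norm_nonneg _).trans (hδ x hx)
      simp only [norm_iteratedFDerivWithin_zero, sub_self, norm_zero]
      positivity
    · rw [hderiv hj.ne' hjm.le hx]
      exact hlow j hj hjm
  intro ξ hξ
  have := norm_iteratedFDerivWithin_le_of_bound_top_of_bound_at (hf.sub contDiffOn_const) hs hB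
    hBs hx hδ (fun ξ hξ ↦ hderiv hm le_rfl hξ ▸ htop ξ hξ) hlow' m le_rfl ξ hξ
  rwa [Nat.sub_self, norm_iteratedFDerivWithin_zero] at this

theorem norm_iteratedFDerivWithin_le_on_closedBall {ρ : ℝ}
    (hf : ContDiffOn ℝ m f (closedBall x ρ)) (hs : UniqueDiffOn ℝ (closedBall x ρ)) (hρ : ρ ≠ 0)
    (h : ∀ z ∈ ball x ρ, ‖iteratedFDerivWithin ℝ m f (closedBall x ρ) z‖ ≤ c) :
    ∀ z ∈ closedBall x ρ, ‖iteratedFDerivWithin ℝ m f (closedBall x ρ) z‖ ≤ c := by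
  have hcont : ContinuousOn (iteratedFDerivWithin ℝ m f (closedBall x ρ)) (closure (ball x ρ)) := by
    rw [closure_ball x hρ]; exact hf.continuousOn_iteratedFDerivWithin le_rfl hs
  simpa only [closure_ball x hρ] using norm_le_of_forall_mem_of_continuousOn_closure hcont h

end

theorem add_inv_smul_mem_closedBall {E : Type*} [NormedAddCommGroup E] [NormedSpace ℝ E]
    {Γ ρ R : ℝ} (hΓ : 0 < Γ) (x : E) {u : E} (hρ : ‖u‖ ≤ ρ * Γ) (hR : ‖u‖ ≤ R) :
    x + Γ⁻¹ • u ∈ closedBall x (min ρ (Γ⁻¹ * R)) := by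
  rw [mem_closedBall, dist_eq_norm, add_sub_cancel_left, norm_smul,
    Real.norm_of_nonneg (by positivity)]
  refine le_min ?_ (by gcongr)
  calc Γ⁻¹ * ‖u‖ ≤ Γ⁻¹ * (ρ * Γ) := by gcongr
    _ = ρ := by field_simp

theorem taylor_estimate_fast_vanishing_general (n : ℕ) (hn : 4 ≤ n)
    (C₀ Λ A : ℝ) (hC₀ : 0 < C₀) :
    ∃ C : ℝ, 0 < C ∧
      ∀ (Γ : ℝ), 1 ≤ Γ → ∀ (ρ : ℝ), 0 < ρ → ∀ (x : Euc n) (K : Euc n → ℝ),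
        ContDiffOn ℝ (n - 2 : ℕ) K (Metric.closedBall x ρ) →
        (∀ j : ℕ, 1 ≤ j → j ≤ n - 2 →
          ‖iteratedFDerivWithin ℝ j K (Metric.closedBall x ρ) x‖ ≤
            C₀ * ‖iteratedFDerivWithin ℝ 1 K (Metric.closedBall x ρ) x‖ ^
              (((n : ℝ) - 2 - (j : ℝ)) / ((n : ℝ) - 3))) →
        (∀ z ∈ Metric.ball x ρ,
          ‖iteratedFDerivWithin ℝ (n - 2) K (Metric.closedBall x ρ) z‖ ≤ Λ) →
        ‖iteratedFDerivWithin ℝ 1 K (Metric.closedBall x ρ) x‖ ≤ A * Γ ^ ((3 : ℝ) - (n : ℝ)) →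
        ∀ z w : Euc n, ‖z‖ ≤ ρ * Γ → ‖w‖ ≤ ρ * Γ →
          |K (x + Γ⁻¹ • z) - K (x + Γ⁻¹ • w)|
            ≤ C * Γ ^ ((2 : ℝ) - (n : ℝ)) * (1 + max ‖z‖ ‖w‖) ^ (n - 2) := by
  set m := n - 2
  set c := max Λ (C₀ * max A 1)
  refine ⟨2 * (m + 1) * c, by positivity, ?_⟩
  intro Γ hΓ ρ hρ x K hK hflat htop hgrad z w hz hw
  set R := 1 + max ‖z‖ ‖w‖
  have hΓ0 : 0 < Γ := by linarith
  have hs : UniqueDiffOn ℝ (closedBall x ρ) :=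
    uniqueDiffOn_convex (convex_closedBall x ρ) (by simpa [interior_closedBall x hρ.ne'])
  have hBs : closedBall x (min ρ (Γ⁻¹ * R)) ⊆ closedBall x ρ :=
    closedBall_subset_closedBall (min_le_left _ _)
  have hlow (j : ℕ) (hj : 0 < j) (hjm : j < m) :
      ‖iteratedFDerivWithin ℝ j K (closedBall x ρ) x‖ ≤ c * (Γ⁻¹ * R) ^ (m - j) :=
    (le_mul_inv_pow_of_flat hj hjm hC₀.le hΓ0 (norm_nonneg _) (hflat j hj hjm.le) hgrad).trans
      (by gcongr; exacts [le_max_right _ _, le_mul_of_one_le_right (by positivity) (by simp [R])])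
  have hTaylor : ∀ ξ ∈ closedBall x (min ρ (Γ⁻¹ * R)),
      ‖K ξ - K x‖ ≤ (m + 1) * c * (Γ⁻¹ * R) ^ m :=
    norm_sub_le_of_bound_top_of_bound_at hK (by omega) hs (convex_closedBall _ _) hBs (mem_closedBall_self (by positivity))
    (fun ξ hξ ↦ (mem_closedBall_iff_norm.1 hξ).trans (min_le_right _ _))
    (fun ξ hξ ↦ (norm_iteratedFDerivWithin_le_on_closedBall hK hs hρ.ne' htop ξ (hBs hξ)).trans
      (le_max_left _ _)) hlow
  have hΓpow : Γ ^ ((2 : ℝ) - n) = Γ⁻¹ ^ m := by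
    exact_mod_cast rpow_natCast_sub_natCast_of_le hΓ0 (by omega : 2 ≤ n)
  calc |K (x + Γ⁻¹ • z) - K (x + Γ⁻¹ • w)|
      ≤ ‖K (x + Γ⁻¹ • z) - K x‖ + ‖K (x + Γ⁻¹ • w) - K x‖ := by
        simpa only [Real.norm_eq_abs, abs_sub_comm (K x)] using abs_sub_le _ (K x) _
    _ ≤ (m + 1) * c * (Γ⁻¹ * R) ^ m + (m + 1) * c * (Γ⁻¹ * R) ^ m := add_le_add
        (hTaylor _ (add_inv_smul_mem_closedBall hΓ0 x hz (by linarith [le_max_left ‖z‖ ‖w‖])))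
        (hTaylor _ (add_inv_smul_mem_closedBall hΓ0 x hw (by linarith [le_max_right ‖z‖ ‖w‖])))
    _ = 2 * (m + 1) * c * Γ ^ ((2 : ℝ) - n) * R ^ m := by rw [hΓpow]; ring_nf

/-- Taylor estimate from flatness (K1) and the fast vanishing rate
`‖∇K(x)‖ ≤ A·Γ^{3-n}` of the gradient. -/
theorem taylor_estimate_fast_vanishing (n : ℕ) (hn : 4 ≤ n)
    (C₀ Λ A : ℝ) (hC₀ : 0 < C₀) (hΛ : 0 < Λ) (hA : 0 < A) :
    ∃ C : ℝ, 0 < C ∧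
      ∀ (Γ : ℝ), 1 ≤ Γ → ∀ (ρ : ℝ), 0 < ρ → ∀ (x : Euc n) (K : Euc n → ℝ),
        ContDiffOn ℝ (n - 2 : ℕ) K (Metric.closedBall x ρ) →
        (∀ j : ℕ, 1 ≤ j → j ≤ n - 2 →
          ‖iteratedFDerivWithin ℝ j K (Metric.closedBall x ρ) x‖ ≤
            C₀ * ‖iteratedFDerivWithin ℝ 1 K (Metric.closedBall x ρ) x‖ ^
              (((n : ℝ) - 2 - (j : ℝ)) / ((n : ℝ) - 3))) →
        (∀ z ∈ Metric.ball x ρ,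
          ‖iteratedFDerivWithin ℝ (n - 2) K (Metric.closedBall x ρ) z‖ ≤ Λ) →
        ‖iteratedFDerivWithin ℝ 1 K (Metric.closedBall x ρ) x‖ ≤ A * Γ ^ ((3 : ℝ) - (n : ℝ)) →
        ∀ z w : Euc n, ‖z‖ ≤ ρ * Γ → ‖w‖ ≤ ρ * Γ →
          |K (x + Γ⁻¹ • z) - K (x + Γ⁻¹ • w)|
            ≤ C * Γ ^ ((2 : ℝ) - (n : ℝ)) * (1 + max ‖z‖ ‖w‖) ^ (n - 2) :=
  taylor_estimate_fast_vanishing_general n hn C₀ Λ A hC₀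
end
end

section
/- Let n ≥ 2. There exist constants C₁, C₂ > 0 depending only on n with the following property. Let δ > 0, r > 0, x ∈ ℝⁿ, e = (1,0,…,0), and let K : B(x,r) → ℝ be continuously differentiable with ‖∇K(z) − δ·e‖ ≤ δ/4 for all z ∈ B(x,r). Let Γ ≥ 1, R ≥ 1, λ ∈ [R, R+2], and define H(y) = K(x + Γ^{−1}(y − Re)) wherever this is defined. Then for every y with |y| ≥ λ such that both x + Γ^{−1}(y − Re) and x + Γ^{−1}(y^λ − Re) lie in B(x,r), where y^λ = λ²y/|y|²: (i) |H(y^λ) − H(y)| ≤ C₂·Γ^{−1}·δ·(|y| − λ); and (ii) if moreover |y| ≤ 2λ and y₁ > 2·|(y₂,…,yₙ)|, then H(y^λ) − H(y) ≤ −C₁·Γ^{−1}·δ·(|y| − λ). -/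
/-!
The two evaluation points differ by `Γ⁻¹ • (y^λ - y)`, a nonpositive multiple of `y` of length
`Γ⁻¹ (|y|² - λ²) / |y|`, which lies between `Γ⁻¹ (|y| - λ)` and `2 Γ⁻¹ (|y| - λ)`. By the mean
value inequality, `H(y^λ) - H(y)` is the increment `⟪δ e, Γ⁻¹ • (y^λ - y)⟫` of the linear model up
to an error `δ/4` times the length of the step. This gives (i) with `C₂ = 5/2`. On the cone
`y₁ > 2 |(y₂, …, yₙ)|` one has `y₁ ≥ 4/5 |y|`, so the linear increment is at most `-4/5 δ` times
the length of the step, which gives (ii) with `C₁ = 11/20`.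
-/

open Metric Set

noncomputable section

/-- Euclidean norm of the last `n - 1` coordinates `|(y₂, …, yₙ)|`. -/
def tailNorm (n : ℕ) (h0 : 0 < n) (y : Euc n) : ℝ :=
  Real.sqrt (∑ i ∈ Finset.univ.erase (⟨0, h0⟩ : Fin n), (y i) ^ 2)

open scoped RealInnerProductSpace

section Gradient

variable {F : Type*} [NormedAddCommGroup F] [InnerProductSpace ℝ F] [CompleteSpace F]
  {K : F → ℝ} {s : Set F} {g a b : F} {ε : ℝ}

theorem abs_sub_sub_inner_le_of_norm_gradient_sub_le (hs : Convex ℝ s)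
    (hK : ∀ z ∈ s, DifferentiableAt ℝ K z) (hgrad : ∀ z ∈ s, ‖gradient K z - g‖ ≤ ε)
    (ha : a ∈ s) (hb : b ∈ s) :
    |K b - K a - ⟪g, b - a⟫| ≤ ε * ‖b - a‖ := by
  have bound : ∀ z ∈ s, ‖fderiv ℝ K z - InnerProductSpace.toDual ℝ F g‖ ≤ ε := fun z hz => by
    rw [← toDual_gradient, ← map_sub, LinearIsometryEquiv.norm_map]
    exact hgrad z hz
  simpa using hs.norm_image_sub_le_of_norm_fderiv_le' hK bound ha hb

theorem abs_sub_le_of_norm_gradient_sub_le (hs : Convex ℝ s)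
    (hK : ∀ z ∈ s, DifferentiableAt ℝ K z) (hgrad : ∀ z ∈ s, ‖gradient K z - g‖ ≤ ε)
    (ha : a ∈ s) (hb : b ∈ s) :
    |K b - K a| ≤ (‖g‖ + ε) * ‖b - a‖ := by
  have hmvt := abs_sub_sub_inner_le_of_norm_gradient_sub_le hs hK hgrad ha hb
  have hcs := abs_real_inner_le_norm g (b - a)
  have htri := abs_sub_abs_le_abs_sub (K b - K a) ⟪g, b - a⟫
  linarith

theorem sub_le_of_norm_gradient_sub_le_of_inner_le (hs : Convex ℝ s)
    (hK : ∀ z ∈ s, DifferentiableAt ℝ K z) (hgrad : ∀ z ∈ s, ‖gradient K z - g‖ ≤ ε)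
    (ha : a ∈ s) (hb : b ∈ s) {κ : ℝ} (hinner : ⟪g, b - a⟫ ≤ -κ * ‖b - a‖) :
    K b - K a ≤ (ε - κ) * ‖b - a‖ := by
  have hmvt := (abs_le.mp (abs_sub_sub_inner_le_of_norm_gradient_sub_le hs hK hgrad ha hb)).2
  linarith

end Gradient

theorem sq_div_sq_le_one_of_abs_le {a b : ℝ} (h : |a| ≤ b) : a ^ 2 / b ^ 2 ≤ 1 :=
  div_le_one_of_le₀ (sq_le_sq' (abs_le.mp h).1 (abs_le.mp h).2) (sq_nonneg _)

section Inversion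

variable {n : ℕ} {lam : ℝ} {y : Euc n}

theorem invPt_sub_self (lam : ℝ) (y : Euc n) :
    invPt lam y - y = -((1 - lam ^ 2 / ‖y‖ ^ 2) • y) := by
  rw [invPt, sub_smul, one_smul, neg_sub]

theorem norm_invPt_sub_self (hlam : |lam| ≤ ‖y‖) :
    ‖invPt lam y - y‖ = (‖y‖ ^ 2 - lam ^ 2) / ‖y‖ := by
  rw [invPt_sub_self, norm_neg, norm_smul,
    Real.norm_of_nonneg (sub_nonneg.mpr (sq_div_sq_le_one_of_abs_le hlam))]
  rcases (norm_nonneg y).eq_or_lt with hy | hy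
  · simp [← hy]
  · field_simp

theorem sub_le_norm_invPt_sub_self (hlam : 0 ≤ lam) (hy : lam ≤ ‖y‖) :
    ‖y‖ - lam ≤ ‖invPt lam y - y‖ := by
  rw [norm_invPt_sub_self (abs_le.mpr ⟨by linarith, hy⟩)]
  rcases (norm_nonneg y).eq_or_lt with hy0 | hy0
  · obtain rfl : lam = 0 := by linarith
    simp [← hy0]
  · rw [le_div_iff₀ hy0]
    nlinarith

theorem norm_invPt_sub_self_le (hlam : 0 ≤ lam) (hy : lam ≤ ‖y‖) :
    ‖invPt lam y - y‖ ≤ 2 * (‖y‖ - lam) := by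
  rw [norm_invPt_sub_self (abs_le.mpr ⟨by linarith, hy⟩)]
  rcases (norm_nonneg y).eq_or_lt with hy0 | hy0
  · obtain rfl : lam = 0 := by linarith
    simp [← hy0]
  · rw [div_le_iff₀ hy0]
    nlinarith [sq_nonneg (‖y‖ - lam)]

theorem inner_smul_single_smul_invPt_sub_self_le (hlam : |lam| ≤ ‖y‖) {i : Fin n} {κ : ℝ}
    (hy : κ * ‖y‖ ≤ y i) {δ c : ℝ} (hδ : 0 ≤ δ) (hc : 0 ≤ c) :
    ⟪δ • EuclideanSpace.single i 1, c • (invPt lam y - y)⟫ ≤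
      -(κ * δ) * ‖c • (invPt lam y - y)‖ := by
  have hμ := mul_nonneg hc (sub_nonneg.mpr (sq_div_sq_le_one_of_abs_le hlam))
  rw [invPt_sub_self, smul_neg, smul_smul, inner_neg_right, inner_smul_left, inner_smul_right,
    EuclideanSpace.inner_single_left, norm_neg, norm_smul, Real.norm_of_nonneg hμ]
  simp only [map_one, one_mul, RCLike.conj_to_real]
  nlinarith [mul_le_mul_of_nonneg_left hy (mul_nonneg hδ hμ)]

theorem norm_sq_eq_sq_add_tailNorm_sq (h0 : 0 < n) (y : Euc n) :
    ‖y‖ ^ 2 = y ⟨0, h0⟩ ^ 2 + tailNorm n h0 y ^ 2 := by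
  rw [EuclideanSpace.norm_sq_eq, tailNorm, Real.sq_sqrt (Finset.sum_nonneg fun i _ => sq_nonneg _),
    ← Finset.add_sum_erase _ _ (Finset.mem_univ (⟨0, h0⟩ : Fin n))]
  simp only [Real.norm_eq_abs, sq_abs]

theorem mul_norm_le_of_two_mul_tailNorm_lt (h0 : 0 < n) (hy : 2 * tailNorm n h0 y < y ⟨0, h0⟩) :
    4 / 5 * ‖y‖ ≤ y ⟨0, h0⟩ := by
  have hsq := norm_sq_eq_sq_add_tailNorm_sq h0 y
  have hT : 0 ≤ tailNorm n h0 y := Real.sqrt_nonneg _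
  nlinarith [norm_nonneg y, sq_nonneg (2 * tailNorm n h0 y - y ⟨0, h0⟩)]

end Inversion

theorem scalar_curvature_difference_estimate_general (n : ℕ) (h0 : 0 < n) :
    ∃ C₁ : ℝ, 0 < C₁ ∧ ∃ C₂ : ℝ, 0 < C₂ ∧
      ∀ (δ r : ℝ), 0 < δ → 0 < r → ∀ (x : Euc n) (K : Euc n → ℝ),
        ContDiffOn ℝ 1 K (Metric.ball x r) →
        (∀ z ∈ Metric.ball x r,
          ‖gradient K z - δ • EuclideanSpace.single (⟨0, h0⟩ : Fin n) (1 : ℝ)‖ ≤ δ / 4) →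
        ∀ (Γ R lam : ℝ), 1 ≤ Γ → 1 ≤ R → lam ∈ Set.Icc R (R + 2) →
        ∀ y : Euc n, lam ≤ ‖y‖ →
          x + Γ⁻¹ • (y - R • EuclideanSpace.single (⟨0, h0⟩ : Fin n) (1 : ℝ)) ∈
            Metric.ball x r →
          x + Γ⁻¹ • (invPt lam y - R • EuclideanSpace.single (⟨0, h0⟩ : Fin n) (1 : ℝ)) ∈
            Metric.ball x r →
          (|K (x + Γ⁻¹ • (invPt lam y - R • EuclideanSpace.single (⟨0, h0⟩ : Fin n) (1 : ℝ)))
              - K (x + Γ⁻¹ • (y - R • EuclideanSpace.single (⟨0, h0⟩ : Fin n) (1 : ℝ)))|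
            ≤ C₂ * Γ⁻¹ * δ * (‖y‖ - lam)) ∧
          (‖y‖ ≤ 2 * lam → 2 * tailNorm n h0 y < y (⟨0, h0⟩ : Fin n) →
            K (x + Γ⁻¹ • (invPt lam y - R • EuclideanSpace.single (⟨0, h0⟩ : Fin n) (1 : ℝ)))
                - K (x + Γ⁻¹ • (y - R • EuclideanSpace.single (⟨0, h0⟩ : Fin n) (1 : ℝ)))
              ≤ -C₁ * Γ⁻¹ * δ * (‖y‖ - lam)) := by
  refine ⟨11 / 20, by norm_num, 5 / 2, by norm_num, ?_⟩
  intro δ r hδ _ x K hK hgrad Γ R lam hΓ hR hlam y hy ha hb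
  set e : Euc n := EuclideanSpace.single ⟨0, h0⟩ 1
  have hK' : ∀ z ∈ ball x r, DifferentiableAt ℝ K z := fun z hz =>
    (hK.differentiableOn one_ne_zero).differentiableAt (isOpen_ball.mem_nhds hz)
  have hlam0 : 0 ≤ lam := by linarith [hlam.1]
  have hΓ0 : 0 < Γ⁻¹ := by positivity
  have hδe : ‖δ • e‖ = δ := by simp [e, norm_smul, hδ.le]
  have hstep : x + Γ⁻¹ • (invPt lam y - R • e) - (x + Γ⁻¹ • (y - R • e)) =
      Γ⁻¹ • (invPt lam y - y) := by module
  have hstep_norm : ‖Γ⁻¹ • (invPt lam y - y)‖ = Γ⁻¹ * ‖invPt lam y - y‖ := by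
    rw [norm_smul, Real.norm_of_nonneg hΓ0.le]
  refine ⟨?_, fun _ hcone => ?_⟩
  · have hdiff := abs_sub_le_of_norm_gradient_sub_le (convex_ball x r) hK' hgrad ha hb
    rw [hstep, hstep_norm, hδe] at hdiff
    calc _ ≤ (δ + δ / 4) * (Γ⁻¹ * ‖invPt lam y - y‖) := hdiff
      _ ≤ (δ + δ / 4) * (Γ⁻¹ * (2 * (‖y‖ - lam))) := by
        gcongr
        exact norm_invPt_sub_self_le hlam0 hy
      _ = 5 / 2 * Γ⁻¹ * δ * (‖y‖ - lam) := by ring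
  · have hinner := inner_smul_single_smul_invPt_sub_self_le (abs_le.mpr ⟨by linarith, hy⟩)
      (mul_norm_le_of_two_mul_tailNorm_lt h0 hcone) hδ.le hΓ0.le
    rw [← hstep] at hinner
    have hdiff :=
      sub_le_of_norm_gradient_sub_le_of_inner_le (convex_ball x r) hK' hgrad ha hb hinner
    rw [hstep, hstep_norm] at hdiff
    calc _ ≤ (δ / 4 - 4 / 5 * δ) * (Γ⁻¹ * ‖invPt lam y - y‖) := hdiff
      _ = -(11 / 20 * δ * (Γ⁻¹ * ‖invPt lam y - y‖)) := by ring
      _ ≤ -(11 / 20 * δ * (Γ⁻¹ * (‖y‖ - lam))) := by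
        gcongr
        exact sub_le_norm_invPt_sub_self hlam0 hy
      _ = -(11 / 20) * Γ⁻¹ * δ * (‖y‖ - lam) := by ring

/-- the scalar-curvature difference estimate when `∇K ≈ δ·e` near the
blow-up point. -/
theorem scalar_curvature_difference_estimate (n : ℕ) (hn : 2 ≤ n) (h0 : 0 < n) :
    ∃ C₁ : ℝ, 0 < C₁ ∧ ∃ C₂ : ℝ, 0 < C₂ ∧
      ∀ (δ r : ℝ), 0 < δ → 0 < r → ∀ (x : Euc n) (K : Euc n → ℝ),
        ContDiffOn ℝ 1 K (Metric.ball x r) →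
        (∀ z ∈ Metric.ball x r,
          ‖gradient K z - δ • EuclideanSpace.single (⟨0, h0⟩ : Fin n) (1 : ℝ)‖ ≤ δ / 4) →
        ∀ (Γ R lam : ℝ), 1 ≤ Γ → 1 ≤ R → lam ∈ Set.Icc R (R + 2) →
        ∀ y : Euc n, lam ≤ ‖y‖ →
          x + Γ⁻¹ • (y - R • EuclideanSpace.single (⟨0, h0⟩ : Fin n) (1 : ℝ)) ∈
            Metric.ball x r →
          x + Γ⁻¹ • (invPt lam y - R • EuclideanSpace.single (⟨0, h0⟩ : Fin n) (1 : ℝ)) ∈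
            Metric.ball x r →
          (|K (x + Γ⁻¹ • (invPt lam y - R • EuclideanSpace.single (⟨0, h0⟩ : Fin n) (1 : ℝ)))
              - K (x + Γ⁻¹ • (y - R • EuclideanSpace.single (⟨0, h0⟩ : Fin n) (1 : ℝ)))|
            ≤ C₂ * Γ⁻¹ * δ * (‖y‖ - lam)) ∧
          (‖y‖ ≤ 2 * lam → 2 * tailNorm n h0 y < y (⟨0, h0⟩ : Fin n) →
            K (x + Γ⁻¹ • (invPt lam y - R • EuclideanSpace.single (⟨0, h0⟩ : Fin n) (1 : ℝ)))
                - K (x + Γ⁻¹ • (y - R • EuclideanSpace.single (⟨0, h0⟩ : Fin n) (1 : ℝ)))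
              ≤ -C₁ * Γ⁻¹ * δ * (‖y‖ - lam)) :=
  scalar_curvature_difference_estimate_general n h0
end
end
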